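/- arXiv:2605.02203 — 3 statements merged into one kernel-verified Lean document; each statement's English description precedes it below -/
import Mathlib

section
/- Let φ: (0,1) → ℝ be strictly convex and differentiable, and suppose it extends continuously to [0,1] with φ(0) = φ(1) = 0. Fix r with 0 < r < lim_{s→0⁺}(-φ'(s)) (assume this limit exists in (0,∞]). Then there exists a unique s_r ∈ (0,1) satisfying r = (s_r - 1)·φ'(s_r) - φ(s_r), and the function f(s) := (-φ(s) - s·r)/(1-s) attains its unique maximum on (0,1) at s = s_r. -/
open Set Filter

/-- For `φ` strictly convex and differentiable on `(0,1)`, continuous on `[0,1]` with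
`φ 0 = φ 1 = 0`, and `0 < r < lim_{s→0⁺} (-φ'(s))` (the limit existing in `(0,∞]`),
there is a unique `s_r ∈ (0,1)` with `r = (s_r - 1) φ'(s_r) - φ(s_r)`, and
`f s := (-φ s - s r)/(1-s)` attains its unique maximum on `(0,1)` at `s_r`. -/
theorem exists_unique_critical_point_hoeffding
    (φ : ℝ → ℝ) (r : ℝ) (L : EReal)
    (hconv : StrictConvexOn ℝ (Ioo (0:ℝ) 1) φ)
    (hdiff : ∀ s ∈ Ioo (0:ℝ) 1, DifferentiableAt ℝ φ s)
    (hcont : ContinuousOn φ (Icc (0:ℝ) 1))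
    (h0 : φ 0 = 0) (h1 : φ 1 = 0)
    (hL : Tendsto (fun s => ((-deriv φ s : ℝ) : EReal)) (nhdsWithin 0 (Ioi (0:ℝ))) (nhds L))
    (hr0 : 0 < r) (hrL : (r : EReal) < L) :
    ∃ sr ∈ Ioo (0:ℝ) 1,
      (r = (sr - 1) * deriv φ sr - φ sr) ∧
      (∀ s ∈ Ioo (0:ℝ) 1, s ≠ sr →
        (-φ s - s * r) / (1 - s) < (-φ sr - sr * r) / (1 - sr)) ∧
      (∀ s ∈ Ioo (0:ℝ) 1, r = (s - 1) * deriv φ s - φ s → s = sr) := by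
  set g : ℝ → ℝ := fun s => (s - 1) * deriv φ s - φ s with hgdef
  set F : ℝ → ℝ := fun s => (-φ s - s * r) / (1 - s) with hFdef
  -- g is strictly antitone on (0,1)
  have hganti : StrictAntiOn g (Ioo (0:ℝ) 1) := by
    intro x hx y hy hxy
    have hs1 : deriv φ x < slope φ x y := hconv.deriv_lt_slope hx hy hxy (hdiff x hx)
    have hs2 : slope φ x y < deriv φ y := hconv.slope_lt_deriv hx hy hxy (hdiff y hy)
    rw [slope_def_field] at hs1 hs2
    have hyx : (0:ℝ) < y - x := by linarith
    have hA : (y - x) * deriv φ x < φ y - φ x := by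
      rw [lt_div_iff₀ hyx] at hs1; linarith
    have hB : φ y - φ x < (y - x) * deriv φ y := by
      rw [div_lt_iff₀ hyx] at hs2; linarith
    have hd : deriv φ x < deriv φ y := hs1.trans hs2
    have hy1 : y < 1 := hy.2
    simp only [hgdef]
    nlinarith [mul_pos (sub_pos.2 hd) (sub_pos.2 hy1)]
  -- derivative of F
  have hF : ∀ s ∈ Ioo (0:ℝ) 1, HasDerivAt F ((g s - r) / (1 - s) ^ 2) s := by
    intro s hs
    have h1s : (1:ℝ) - s ≠ 0 := by have := hs.2; intro h; linarith [sub_eq_zero.mp h]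
    have hN : HasDerivAt (fun t : ℝ => -φ t - t * r) (-deriv φ s - 1 * r) s :=
      ((hdiff s hs).hasDerivAt.neg).sub ((hasDerivAt_id s).mul_const r)
    have hD : HasDerivAt (fun t : ℝ => 1 - t) (0 - 1) s :=
      (hasDerivAt_const s (1:ℝ)).sub (hasDerivAt_id s)
    have := hN.div hD h1s
    refine this.congr_deriv ?_
    simp only [hgdef]
    ring
  have hFc : ∀ s ∈ Ioo (0:ℝ) 1, ContinuousAt F s := fun s hs =>
    (hF s hs).differentiableAt.continuousAt
  -- eventually -deriv φ s > r near 0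
  have hev : ∀ᶠ s in nhdsWithin 0 (Ioi (0:ℝ)), r < -deriv φ s := by
    have := hL.eventually_const_lt hrL
    filter_upwards [this] with s hs
    exact_mod_cast hs
  obtain ⟨ε, hε0, hεsub⟩ : ∃ ε > 0, ∀ s ∈ Ioo (0:ℝ) ε, r < -deriv φ s := by
    rw [eventually_nhdsWithin_iff, Metric.eventually_nhds_iff] at hev
    obtain ⟨δ, hδ, hδp⟩ := hev
    exact ⟨δ, hδ, fun s hs => hδp (by rw [Real.dist_eq, sub_zero, abs_of_pos hs.1]; exact hs.2) hs.1⟩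
  set ε₁ : ℝ := min ε 1 with hε₁def
  have hε₁0 : 0 < ε₁ := lt_min hε0 one_pos
  have hε₁1 : ε₁ ≤ 1 := min_le_right _ _
  have hε₁ε : ε₁ ≤ ε := min_le_left _ _
  set a : ℝ := ε₁ / 3 with hadef
  set b : ℝ := 2 * ε₁ / 3 with hbdef
  have ha : a ∈ Ioo (0:ℝ) 1 := ⟨by positivity, by simp only [hadef]; linarith⟩
  have hb : b ∈ Ioo (0:ℝ) 1 := ⟨by positivity, by simp only [hbdef]; linarith⟩
  have hab : a < b := by simp only [hadef, hbdef]; linarith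
  have hda : r < -deriv φ a := hεsub a ⟨ha.1, by simp only [hadef]; linarith⟩
  have hdb : r < -deriv φ b := hεsub b ⟨hb.1, by simp only [hbdef]; linarith⟩
  -- φ a ≤ -r * a
  have hφa : φ a ≤ -r * a := by
    have key : ∀ x ∈ Ioo (0:ℝ) a, φ a < φ x - r * (a - x) := by
      intro x hx
      have hxI : x ∈ Ioo (0:ℝ) 1 := ⟨hx.1, hx.2.trans ha.2⟩
      have := hconv.slope_lt_deriv hxI ha hx.2 (hdiff a ha)
      rw [slope_def_field] at this
      have hax : (0:ℝ) < a - x := by linarith [hx.2]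
      rw [div_lt_iff₀ hax] at this
      nlinarith [mul_pos hax (sub_pos.2 hda)]
    have hne : (nhdsWithin (0:ℝ) (Ioo 0 a)).NeBot := by
      rw [nhdsWithin_Ioo_eq_nhdsGT ha.1]
      infer_instance
    have hφ0 : Tendsto φ (nhdsWithin 0 (Ioo (0:ℝ) a)) (nhds 0) := by
      have : ContinuousWithinAt φ (Icc (0:ℝ) 1) 0 :=
        hcont 0 ⟨le_refl _, zero_le_one⟩
      rw [ContinuousWithinAt, h0] at this
      exact this.mono_left (nhdsWithin_mono _ (fun x hx => ⟨le_of_lt hx.1, le_of_lt (hx.2.trans_le ha.2.le)⟩))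
    have hlim : Tendsto (fun x => φ x - r * (a - x)) (nhdsWithin 0 (Ioo (0:ℝ) a)) (nhds (0 - r * (a - 0))) :=
      hφ0.sub (((continuous_const.mul ((continuous_const.sub continuous_id))).tendsto 0).mono_left nhdsWithin_le_nhds)
    have := ge_of_tendsto hlim (eventually_nhdsWithin_of_forall (fun x hx => (key x hx).le))
    linarith
  -- φ b < -r * b, hence F b > 0
  have hφb : φ b < -r * b := by
    have := hconv.slope_lt_deriv ha hb hab (hdiff b hb)
    rw [slope_def_field] at this
    have hba : (0:ℝ) < b - a := by linarith
    rw [div_lt_iff₀ hba] at this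
    nlinarith [mul_pos hba (sub_pos.2 hdb)]
  have hFb : 0 < F b := by
    have h1b : (0:ℝ) < 1 - b := by linarith [hb.2]
    have : 0 < -φ b - b * r := by nlinarith
    exact div_pos this h1b
  set M : ℝ := F b with hMdef
  -- eventually near 0, F s < M
  have hnum0 : Tendsto (fun s => -φ s - s * r) (nhdsWithin 0 (Ioo (0:ℝ) 1)) (nhds 0) := by
    have hφ0 : Tendsto φ (nhdsWithin 0 (Ioo (0:ℝ) 1)) (nhds 0) := by
      have : ContinuousWithinAt φ (Icc (0:ℝ) 1) 0 := hcont 0 ⟨le_refl _, zero_le_one⟩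
      rw [ContinuousWithinAt, h0] at this
      exact this.mono_left (nhdsWithin_mono _ Ioo_subset_Icc_self)
    have : Tendsto (fun s => -φ s - s * r) (nhdsWithin 0 (Ioo (0:ℝ) 1)) (nhds (-0 - 0 * r)) :=
      (hφ0.neg).sub (((continuous_id.mul continuous_const).tendsto 0).mono_left nhdsWithin_le_nhds)
    simpa using this
  have hFtends0 : Tendsto F (nhdsWithin 0 (Ioo (0:ℝ) 1)) (nhds 0) := by
    have hden : Tendsto (fun s : ℝ => 1 - s) (nhdsWithin 0 (Ioo (0:ℝ) 1)) (nhds 1) := by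
      have : Tendsto (fun s : ℝ => 1 - s) (nhdsWithin 0 (Ioo (0:ℝ) 1)) (nhds (1 - 0)) :=
        ((continuous_const.sub continuous_id).tendsto 0).mono_left nhdsWithin_le_nhds
      simpa using this
    have := hnum0.div hden one_ne_zero
    rw [zero_div] at this
    exact this
  have hev0 : ∀ᶠ s in nhdsWithin 0 (Ioo (0:ℝ) 1), F s < M :=
    hFtends0.eventually_lt_const hFb
  -- eventually near 1, F s < M
  have hev1 : ∀ᶠ s in nhdsWithin 1 (Ioo (0:ℝ) 1), F s < M := by
    have hφ1 : Tendsto φ (nhdsWithin 1 (Ioo (0:ℝ) 1)) (nhds 0) := by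
      have : ContinuousWithinAt φ (Icc (0:ℝ) 1) 1 := hcont 1 ⟨zero_le_one, le_refl _⟩
      rw [ContinuousWithinAt, h1] at this
      exact this.mono_left (nhdsWithin_mono _ Ioo_subset_Icc_self)
    have hnum1 : Tendsto (fun s => -φ s - s * r) (nhdsWithin 1 (Ioo (0:ℝ) 1)) (nhds (-r)) := by
      have : Tendsto (fun s => -φ s - s * r) (nhdsWithin 1 (Ioo (0:ℝ) 1)) (nhds (-0 - 1 * r)) :=
        (hφ1.neg).sub (((continuous_id.mul continuous_const).tendsto 1).mono_left nhdsWithin_le_nhds)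
      simpa using this
    have hnumneg : ∀ᶠ s in nhdsWithin 1 (Ioo (0:ℝ) 1), -φ s - s * r < 0 :=
      hnum1.eventually_lt_const (by linarith)
    filter_upwards [hnumneg, self_mem_nhdsWithin] with s hneg hs
    have h1s : (0:ℝ) < 1 - s := by linarith [hs.2]
    calc F s < 0 := div_neg_of_neg_of_pos hneg h1s
    _ < M := hFb
  -- extract δ intervals
  obtain ⟨δ0, hδ00, hδ0p⟩ : ∃ δ > 0, ∀ s, |s - 0| < δ → s ∈ Ioo (0:ℝ) 1 → F s < M := by
    rw [eventually_nhdsWithin_iff, Metric.eventually_nhds_iff] at hev0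
    obtain ⟨δ, hδ, hp⟩ := hev0
    exact ⟨δ, hδ, fun s h1 h2 => hp h1 h2⟩
  obtain ⟨δ1, hδ10, hδ1p⟩ : ∃ δ > 0, ∀ s, |s - 1| < δ → s ∈ Ioo (0:ℝ) 1 → F s < M := by
    rw [eventually_nhdsWithin_iff, Metric.eventually_nhds_iff] at hev1
    obtain ⟨δ, hδ, hp⟩ := hev1
    exact ⟨δ, hδ, fun s h1 h2 => hp h1 h2⟩
  -- compact interval
  set lo : ℝ := min b (δ0 / 2) with hlodef
  set hi : ℝ := max b (1 - δ1 / 2) with hhidef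
  have hlo0 : 0 < lo := lt_min hb.1 (by linarith)
  have hhi1 : hi < 1 := max_lt hb.2 (by linarith)
  have hlob : lo ≤ b := min_le_left _ _
  have hbhi : b ≤ hi := le_max_left _ _
  have hKsub : Icc lo hi ⊆ Ioo (0:ℝ) 1 := fun x hx => ⟨hlo0.trans_le hx.1, hx.2.trans_lt hhi1⟩
  obtain ⟨c, hcK, hcmax⟩ : ∃ c ∈ Icc lo hi, IsMaxOn F (Icc lo hi) c :=
    isCompact_Icc.exists_isMaxOn (Set.nonempty_Icc.mpr (hlob.trans hbhi))
      (fun x hx => (hFc x (hKsub hx)).continuousWithinAt)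
  have hcI : c ∈ Ioo (0:ℝ) 1 := hKsub hcK
  have hMc : M ≤ F c := hcmax ⟨hlob, hbhi⟩
  -- c is a global max on Ioo 0 1
  have hglobal : ∀ s ∈ Ioo (0:ℝ) 1, F s ≤ F c := by
    intro s hs
    by_cases hsK : s ∈ Icc lo hi
    · exact hcmax hsK
    · have : s < lo ∨ hi < s := by
        rcases lt_or_ge s lo with h | h
        · exact Or.inl h
        · rcases le_or_gt s hi with h' | h'
          · exact absurd ⟨h, h'⟩ hsK
          · exact Or.inr h'
      rcases this with h | h
      · have : |s - 0| < δ0 := by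
          rw [abs_of_pos (by simpa using hs.1)]
          have : lo ≤ δ0 / 2 := min_le_right _ _
          simpa using lt_of_lt_of_le h (by linarith)
        exact ((hδ0p s this hs).trans_le hMc).le
      · have : |s - 1| < δ1 := by
          rw [abs_of_neg (by linarith [hs.2] : s - 1 < 0)]
          have : 1 - δ1 / 2 ≤ hi := le_max_right _ _
          linarith
        exact ((hδ1p s this hs).trans_le hMc).le
  -- critical point equation at c
  have hlocal : IsLocalMax F c := by
    have hIoo : Ioo (0:ℝ) 1 ∈ nhds c := isOpen_Ioo.mem_nhds hcI
    filter_upwards [hIoo] with s hs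
    exact hglobal s hs
  have hderivc : deriv F c = (g c - r) / (1 - c) ^ 2 := (hF c hcI).deriv
  have hgc : g c = r := by
    have h0' := hlocal.deriv_eq_zero
    rw [hderivc] at h0'
    have h1c : (1 - c) ^ 2 ≠ 0 := pow_ne_zero _ (by intro h; have := hcI.2; rw [sub_eq_zero] at h; linarith)
    have := (div_eq_zero_iff.mp h0').resolve_right h1c
    linarith
  refine ⟨c, hcI, hgc.symm, ?_, ?_⟩
  · -- strict maximum
    intro s hs hne
    show F s < F c
    rcases lt_or_gt_of_ne hne with hlt | hgt
    · have hsub : Icc s c ⊆ Ioo (0:ℝ) 1 := fun x hx => ⟨hs.1.trans_le hx.1, hx.2.trans_lt hcI.2⟩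
      have hmono : StrictMonoOn F (Icc s c) := by
        apply strictMonoOn_of_deriv_pos (convex_Icc s c)
          (fun x hx => (hFc x (hsub hx)).continuousWithinAt)
        intro x hx
        rw [interior_Icc] at hx
        have hxI : x ∈ Ioo (0:ℝ) 1 := hsub ⟨hx.1.le, hx.2.le⟩
        rw [(hF x hxI).deriv]
        have hgx : r < g x := by
          rw [← hgc]; exact hganti hxI hcI hx.2
        have h1x : (0:ℝ) < (1 - x) ^ 2 := pow_pos (by linarith [hxI.2]) 2
        exact div_pos (by linarith) h1x
      exact hmono (left_mem_Icc.2 hlt.le) (right_mem_Icc.2 hlt.le) hlt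
    · have hsub : Icc c s ⊆ Ioo (0:ℝ) 1 := fun x hx => ⟨hcI.1.trans_le hx.1, hx.2.trans_lt hs.2⟩
      have hanti : StrictAntiOn F (Icc c s) := by
        apply strictAntiOn_of_deriv_neg (convex_Icc c s)
          (fun x hx => (hFc x (hsub hx)).continuousWithinAt)
        intro x hx
        rw [interior_Icc] at hx
        have hxI : x ∈ Ioo (0:ℝ) 1 := hsub ⟨hx.1.le, hx.2.le⟩
        rw [(hF x hxI).deriv]
        have hgx : g x < r := by
          rw [← hgc]; exact hganti hcI hxI hx.1
        have h1x : (0:ℝ) < (1 - x) ^ 2 := pow_pos (by linarith [hxI.2]) 2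
        exact div_neg_of_neg_of_pos (by linarith) h1x
      exact hanti (left_mem_Icc.2 hgt.le) (right_mem_Icc.2 hgt.le) hgt
  · -- uniqueness
    intro s hs hsr
    exact hganti.injOn hs hcI (by rw [hgc]; exact hsr.symm)
end

section
/- (Pinching inequality) Let ρ be a positive semidefinite operator on a finite-dimensional Hilbert space and let {P_i}_{i=1}^m be a family of mutually orthogonal projections summing to the identity. Define the pinching map E(X) := Σᵢ Pᵢ X Pᵢ. Then ρ ≤ m · E(ρ) in the positive semidefinite (Loewner) order. -/
open Matrix
open scoped ComplexOrder

lemma psd_sum_aux {d : Type*} [Fintype d] [DecidableEq d] {ι : Type*} (s : Finset ι)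
    (f : ι → Matrix d d ℂ) (h : ∀ i ∈ s, (f i).PosSemidef) :
    (∑ i ∈ s, f i).PosSemidef :=
  Finset.sum_induction f _ (fun _ _ ha hb => ha.add hb) (Matrix.PosSemidef.zero) h

lemma psd_smul_aux {d : Type*} [Fintype d] [DecidableEq d] {M : Matrix d d ℂ}
    (hM : M.PosSemidef) {c : ℂ} (hc : 0 ≤ c) : (c • M).PosSemidef := by
  constructor
  · have hcr : star c = c := by
      rw [Complex.star_def, Complex.conj_eq_iff_im]
      exact ((Complex.le_def.mp hc).2).symm
    rw [Matrix.IsHermitian, Matrix.conjTranspose_smul, hcr, hM.1.eq]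
  · intro x
    convert mul_nonneg hc (hM.2 x) using 1
    simp only [Finsupp.sum, Finset.mul_sum]
    refine Finset.sum_congr rfl fun i _ => Finset.sum_congr rfl fun j _ => ?_
    simp only [Matrix.smul_apply, smul_eq_mul]
    ring

/-- Pinching inequality: if `{P i}` are mutually orthogonal Hermitian projections
summing to the identity and `ρ` is positive semidefinite, then
`ρ ≤ m • Σᵢ Pᵢ ρ Pᵢ` in the Loewner order. -/
theorem pinching_inequality
    {d : Type*} [Fintype d] [DecidableEq d] (m : ℕ)
    (ρ : Matrix d d ℂ) (hρ : ρ.PosSemidef)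
    (P : Fin m → Matrix d d ℂ)
    (hherm : ∀ i, (P i).IsHermitian)
    (horth : ∀ i j, P i * P j = if i = j then P i else 0)
    (hsum : ∑ i, P i = 1) :
    ((m : ℂ) • (∑ i, P i * ρ * P i) - ρ).PosSemidef := by
  obtain ⟨A, hA⟩ : ∃ A : Matrix d d ℂ, ρ = Aᴴ * A := by
    open scoped MatrixOrder in exact CStarAlgebra.nonneg_iff_eq_star_mul_self.mp hρ.nonneg
  set B : Fin m → Matrix d d ℂ := fun i => A * P i with hB
  have hBi : ∀ i, (B i)ᴴ * B i = P i * ρ * P i := by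
    intro i
    simp [hB, Matrix.conjTranspose_mul, (hherm i).eq, hA, Matrix.mul_assoc]
  have hBsum : ∑ i, B i = A := by
    rw [hB, ← Finset.mul_sum, hsum, mul_one]
  have key : ((m : ℂ) • (∑ i, P i * ρ * P i) - ρ)
      = (2⁻¹ : ℂ) • ∑ i, ∑ j, ((B i - B j)ᴴ * (B i - B j)) := by
    have expand : ∀ i j : Fin m, (B i - B j)ᴴ * (B i - B j)
        = (B i)ᴴ * B i + (B j)ᴴ * B j - (B i)ᴴ * B j - (B j)ᴴ * B i := by
      intro i j
      rw [Matrix.conjTranspose_sub]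
      noncomm_ring
    simp_rw [expand]
    have h1 : ∑ i : Fin m, ∑ j : Fin m, (B i)ᴴ * B i = (m : ℂ) • ∑ i, P i * ρ * P i := by
      simp_rw [Finset.sum_const, Finset.card_univ, Fintype.card_fin, ← Finset.smul_sum]
      rw [Nat.cast_smul_eq_nsmul]
      simp_rw [hBi]
    have h2 : ∑ i : Fin m, ∑ j : Fin m, (B j)ᴴ * B j = (m : ℂ) • ∑ i, P i * ρ * P i := by
      rw [Finset.sum_comm]; exact h1
    have h3 : ∑ i : Fin m, ∑ j : Fin m, (B i)ᴴ * B j = ρ := by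
      simp_rw [← Finset.mul_sum, hBsum, ← Finset.sum_mul, ← Matrix.conjTranspose_sum, hBsum]
      exact hA.symm
    have h4 : ∑ i : Fin m, ∑ j : Fin m, (B j)ᴴ * B i = ρ := by
      rw [Finset.sum_comm]; exact h3
    simp_rw [Finset.sum_sub_distrib, Finset.sum_add_distrib]
    rw [h1, h2, h3, h4]
    module
  rw [key]
  refine psd_smul_aux ?_ (by rw [Complex.le_def]; norm_num)
  exact psd_sum_aux _ _ fun i _ => psd_sum_aux _ _ fun j _ =>
    Matrix.posSemidef_conjTranspose_mul_self _
end

section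
/- Let ρ, σ be positive definite density matrices on a finite-dimensional Hilbert space, with spectral decompositions ρ = Σᵢ λᵢ |uᵢ⟩⟨uᵢ| and σ = Σⱼ μⱼ |vⱼ⟩⟨vⱼ|. Define the Nussbaum–Szkoła distributions P(i,j) := λᵢ|⟨uᵢ|vⱼ⟩|² and Q(i,j) := μⱼ|⟨uᵢ|vⱼ⟩|². Then for every s ∈ (0,1), Σ_{i,j} P(i,j)^{1-s} Q(i,j)^s = Tr[ρ^{1-s} σ^s]. -/
open Matrix Set

/-- Nussbaum–Szkoła: for positive definite density matrices
`ρ = Σᵢ λᵢ|uᵢ⟩⟨uᵢ|`, `σ = Σⱼ μⱼ|vⱼ⟩⟨vⱼ|`, the distributions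
`P(i,j) = λᵢ|⟨uᵢ|vⱼ⟩|²`, `Q(i,j) = μⱼ|⟨uᵢ|vⱼ⟩|²` satisfy
`Σ_{i,j} P(i,j)^{1-s} Q(i,j)^s = Tr[ρ^{1-s} σ^s]` for all `s ∈ (0,1)`,
the matrix powers being taken spectrally. -/
theorem nussbaum_szkola_quasi_divergence
    {d : Type*} [Fintype d] [DecidableEq d]
    (u v : d → (d → ℂ)) (lam mu : d → ℝ)
    (hu : ∀ i i', dotProduct (star (u i)) (u i') = if i = i' then 1 else 0)
    (hv : ∀ j j', dotProduct (star (v j)) (v j') = if j = j' then 1 else 0)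
    (hlam : ∀ i, 0 < lam i) (hmu : ∀ j, 0 < mu j)
    (hlam1 : ∑ i, lam i = 1) (hmu1 : ∑ j, mu j = 1) :
    ∀ s ∈ Ioo (0:ℝ) 1,
      (∑ i, ∑ j,
          Real.rpow (lam i * ‖dotProduct (star (u i)) (v j)‖ ^ 2) (1 - s) *
          Real.rpow (mu j * ‖dotProduct (star (u i)) (v j)‖ ^ 2) s)
        = (Matrix.trace
            ((∑ i, ((Real.rpow (lam i) (1 - s) : ℝ) : ℂ) • vecMulVec (u i) (star (u i))) *
             (∑ j, ((Real.rpow (mu j) s : ℝ) : ℂ) • vecMulVec (v j) (star (v j))))).re := by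
  rintro s ⟨hs0, hs1⟩
  have key : ∀ (a b : d → ℂ), Matrix.trace (vecMulVec a (star a) * vecMulVec b (star b))
      = (star a ⬝ᵥ b) * (star b ⬝ᵥ a) := by
    intro a b
    simp [Matrix.trace, Matrix.diag, Matrix.mul_apply, vecMulVec_apply, dotProduct,
      Finset.mul_sum, Finset.sum_mul]
    congr 1; ext k; congr 1; ext m; ring
  have hconj : ∀ i j, star (v j) ⬝ᵥ u i = starRingEnd ℂ (star (u i) ⬝ᵥ v j) := by
    intro i j
    simp [dotProduct, map_sum]
    congr 1; ext k; ring
  have htr : Matrix.trace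
            ((∑ i, ((Real.rpow (lam i) (1 - s) : ℝ) : ℂ) • vecMulVec (u i) (star (u i))) *
             (∑ j, ((Real.rpow (mu j) s : ℝ) : ℂ) • vecMulVec (v j) (star (v j))))
      = ∑ i, ∑ j, ((Real.rpow (lam i) (1 - s) * Real.rpow (mu j) s
            * ‖star (u i) ⬝ᵥ v j‖ ^ 2 : ℝ) : ℂ) := by
    rw [Finset.sum_mul_sum, Matrix.trace_sum]
    congr 1; ext i
    rw [Matrix.trace_sum]
    congr 1; ext j
    rw [smul_mul_smul_comm, Matrix.trace_smul, key, hconj, smul_eq_mul,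
      Complex.mul_conj]
    rw [Complex.normSq_eq_norm_sq]
    push_cast
    ring
  rw [htr]
  rw [Complex.re_sum]
  congr 1; ext i
  rw [Complex.re_sum]
  congr 1; ext j
  rw [Complex.ofReal_re]
  set c := ‖star (u i) ⬝ᵥ v j‖ ^ 2 with hc
  have hc0 : (0:ℝ) ≤ c := by positivity
  show (lam i * c) ^ (1 - s) * (mu j * c) ^ s = lam i ^ (1 - s) * mu j ^ s * c
  rw [Real.mul_rpow (hlam i).le hc0, Real.mul_rpow (hmu j).le hc0]
  have hcc : c ^ (1 - s) * c ^ s = c := by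
    rw [← Real.rpow_add' hc0 (by norm_num)]
    simp
  calc lam i ^ (1-s) * c ^ (1-s) * (mu j ^ s * c ^ s)
      = lam i ^ (1-s) * mu j ^ s * (c ^ (1-s) * c ^ s) := by ring
    _ = _ := by rw [hcc]
end
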